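/- Lemma (Convexity of the SCAD_L2 penalty): If a > 2, λ1 > 0 and λ2 > 1/(2(a−1)), then the function θ ↦ λ1·f_SCAD(|θ|) + λ2·θ² is strictly convex on ℝ. -/

import Mathlib

/-
Put `G θ = λ1 f_SCAD(θ) + θ² / (2(a−1))`. Its derivative
`λ1 f_SCAD'(θ) + θ/(a−1) = min (λ1 + θ/(a−1)) (max (aλ1) θ / (a−1))` is nondecreasing, so `G` is
convex, and `G` is nondecreasing on `[0, ∞)`. Hence `θ ↦ G |θ|` is convex, and the penalty is
`G |θ| + (λ2 − 1/(2(a−1))) θ²`, a convex function plus a strictly convex one.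
-/

open intervalIntegral

/-- The SCAD function `f_SCAD(θ) = ∫₀^θ ( 1_{t ≤ λ1} + ((a·λ1 − t)₊/((a−1)·λ1))·1_{t > λ1} ) dt`. -/
noncomputable def fSCAD (a lam1 : ℝ) (θ : ℝ) : ℝ :=
  ∫ t in (0:ℝ)..θ,
    (if t ≤ lam1 then (1:ℝ) else 0) + (max (a * lam1 - t) 0 / ((a - 1) * lam1)) * (if lam1 < t then (1:ℝ) else 0)

open Set

theorem StrictConvexOn.const_mul {E : Type*} [AddCommMonoid E] [Module ℝ E] {s : Set E}
    {f : E → ℝ} (hf : StrictConvexOn ℝ s f) {c : ℝ} (hc : 0 < c) :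
    StrictConvexOn ℝ s fun x => c * f x := by
  refine ⟨hf.1, fun x hx y hy hxy a b ha hb hab => ?_⟩
  have h := mul_lt_mul_of_pos_left (hf.2 hx hy hxy ha hb hab) hc
  simp only [smul_eq_mul] at h ⊢
  linarith

theorem ConvexOn.comp_abs {g : ℝ → ℝ} (hg : ConvexOn ℝ (Ici 0) g) (hg' : MonotoneOn g (Ici 0)) :
    ConvexOn ℝ univ fun x => g |x| := by
  refine ⟨convex_univ, fun x _ y _ a b ha hb hab => ?_⟩
  have hx : |x| ∈ Ici (0:ℝ) := abs_nonneg x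
  have hy : |y| ∈ Ici (0:ℝ) := abs_nonneg y
  have htriangle : |a • x + b • y| ≤ a • |x| + b • |y| := by
    simpa only [smul_eq_mul, abs_mul, abs_of_nonneg ha, abs_of_nonneg hb] using
      abs_add_le (a * x) (b * y)
  calc g |a • x + b • y| ≤ g (a • |x| + b • |y|) :=
        hg' (abs_nonneg (a • x + b • y)) (hg.1 hx hy ha hb hab) htriangle
    _ ≤ a • g |x| + b • g |y| := hg.2 hx hy ha hb hab

section SCAD

variable {a lam1 : ℝ}

-- The integrand of `fSCAD` without the case split; being continuous, it is the derivative everywhere.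
noncomputable def scadDeriv (a lam1 θ : ℝ) : ℝ :=
  min 1 (max (a * lam1 - θ) 0 / ((a - 1) * lam1))

theorem continuous_scadDeriv : Continuous (scadDeriv a lam1) := by
  unfold scadDeriv; fun_prop

theorem scadDeriv_nonneg (ha : 1 < a) (hlam1 : 0 < lam1) (θ : ℝ) : 0 ≤ scadDeriv a lam1 θ :=
  le_min zero_le_one (div_nonneg (le_max_right _ _) (mul_pos (sub_pos.2 ha) hlam1).le)

theorem fSCAD_eq_integral_scadDeriv (ha : 1 < a) (hlam1 : 0 < lam1) (θ : ℝ) :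
    fSCAD a lam1 θ = ∫ u in (0:ℝ)..θ, scadDeriv a lam1 u := by
  have hden : 0 < (a - 1) * lam1 := mul_pos (sub_pos.2 ha) hlam1
  refine integral_congr fun u _ => ?_
  rcases le_or_gt u lam1 with hu | hu
  · have : 1 ≤ max (a * lam1 - u) 0 / ((a - 1) * lam1) := by
      rw [one_le_div hden]; exact le_max_of_le_left (by linarith)
    simp [scadDeriv, hu, not_lt.2 hu, min_eq_left this]
  · have : max (a * lam1 - u) 0 / ((a - 1) * lam1) ≤ 1 := by
      rw [div_le_one hden]; exact max_le (by linarith) hden.le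
    simp [scadDeriv, hu, not_le.2 hu, min_eq_right this]

theorem hasDerivAt_fSCAD (ha : 1 < a) (hlam1 : 0 < lam1) (θ : ℝ) :
    HasDerivAt (fSCAD a lam1) (scadDeriv a lam1 θ) θ := by
  rw [funext (fSCAD_eq_integral_scadDeriv ha hlam1)]
  exact (continuous_scadDeriv.integral_hasStrictDerivAt 0 θ).hasDerivAt

theorem monotone_fSCAD (ha : 1 < a) (hlam1 : 0 < lam1) : Monotone (fSCAD a lam1) :=
  monotone_of_deriv_nonneg (fun θ => (hasDerivAt_fSCAD ha hlam1 θ).differentiableAt)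
    fun θ => (hasDerivAt_fSCAD ha hlam1 θ).deriv ▸ scadDeriv_nonneg ha hlam1 θ

theorem mul_scadDeriv_add_div (ha : 1 < a) (hlam1 : 0 < lam1) (θ : ℝ) :
    lam1 * scadDeriv a lam1 θ + θ / (a - 1) =
      min (lam1 + θ / (a - 1)) (max (a * lam1) θ / (a - 1)) := by
  have ha1 : 0 < a - 1 := sub_pos.2 ha
  have hcancel : lam1 * (max (a * lam1 - θ) 0 / ((a - 1) * lam1)) =
      max (a * lam1 - θ) 0 / (a - 1) := by
    field_simp
  have hmax : max (a * lam1 - θ) 0 / (a - 1) + θ / (a - 1) = max (a * lam1) θ / (a - 1) := by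
    rw [← add_div, ← max_add_add_right, sub_add_cancel, zero_add]
  rw [scadDeriv, mul_min_of_nonneg _ _ hlam1.le, ← min_add_add_right, mul_one, hcancel, hmax]

theorem convexOn_fSCAD_add_sq (ha : 1 < a) (hlam1 : 0 < lam1) :
    ConvexOn ℝ univ fun θ => lam1 * fSCAD a lam1 θ + θ ^ 2 / (2 * (a - 1)) := by
  have hderiv (θ : ℝ) : HasDerivAt (fun θ => lam1 * fSCAD a lam1 θ + θ ^ 2 / (2 * (a - 1)))
      (min (lam1 + θ / (a - 1)) (max (a * lam1) θ / (a - 1))) θ := by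
    rw [← mul_scadDeriv_add_div ha hlam1]
    refine (((hasDerivAt_fSCAD ha hlam1 θ).const_mul lam1).add
      ((hasDerivAt_pow 2 θ).div_const (2 * (a - 1)))).congr_deriv ?_
    norm_num
    exact mul_div_mul_left θ (a - 1) two_ne_zero
  have hmono : Monotone fun θ => min (lam1 + θ / (a - 1)) (max (a * lam1) θ / (a - 1)) := by
    have ha1 : 0 ≤ a - 1 := (sub_pos.2 ha).le
    exact (monotone_const.add (monotone_id.div_const ha1)).min
      ((monotone_const.max monotone_id).div_const ha1)
  exact Monotone.convexOn_univ_of_deriv (fun θ => (hderiv θ).differentiableAt)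
    (funext (fun θ => (hderiv θ).deriv) ▸ hmono)

theorem monotoneOn_fSCAD_add_sq (ha : 1 < a) (hlam1 : 0 < lam1) :
    MonotoneOn (fun θ => lam1 * fSCAD a lam1 θ + θ ^ 2 / (2 * (a - 1))) (Ici 0) := by
  intro x hx y _ hxy
  have hx : 0 ≤ x := hx
  have h2a : 0 ≤ 2 * (a - 1) := by linarith
  have hf := monotone_fSCAD ha hlam1 hxy
  dsimp only
  gcongr

end SCAD

/-- Convexity of the SCAD_L2 penalty: if `a > 2`, `λ1 > 0` and `λ2 > 1/(2(a−1))`, then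
`θ ↦ λ1·f_SCAD(|θ|) + λ2·θ²` is strictly convex on ℝ. -/
theorem scad_l2_strictly_convex
    (a lam1 lam2 : ℝ) (ha : 2 < a) (hlam1 : 0 < lam1)
    (hlam2 : 1 / (2 * (a - 1)) < lam2) :
    ∀ x y : ℝ, x ≠ y → ∀ t : ℝ, 0 < t → t < 1 →
      lam1 * fSCAD a lam1 |t * x + (1 - t) * y| + lam2 * (t * x + (1 - t) * y) ^ 2
        < t * (lam1 * fSCAD a lam1 |x| + lam2 * x ^ 2)
          + (1 - t) * (lam1 * fSCAD a lam1 |y| + lam2 * y ^ 2) := by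
  intro x y hxy t ht0 ht1
  have ha1 : 1 < a := by linarith
  have hconvex : ConvexOn ℝ univ fun θ => lam1 * fSCAD a lam1 |θ| + |θ| ^ 2 / (2 * (a - 1)) :=
    ((convexOn_fSCAD_add_sq ha1 hlam1).subset (subset_univ _) (convex_Ici 0)).comp_abs
      (monotoneOn_fSCAD_add_sq ha1 hlam1)
  have hstrict : StrictConvexOn ℝ univ fun θ : ℝ => (lam2 - 1 / (2 * (a - 1))) * θ ^ 2 :=
    (Even.strictConvexOn_pow even_two two_ne_zero).const_mul (sub_pos.2 hlam2)
  have h := (hconvex.add_strictConvexOn hstrict).2 (mem_univ x) (mem_univ y) hxy ht0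
    (sub_pos.2 ht1) (add_sub_cancel t 1)
  have hsplit (u : ℝ) :
      u ^ 2 / (2 * (a - 1)) + (lam2 - 1 / (2 * (a - 1))) * u ^ 2 = lam2 * u ^ 2 := by
    ring
  simpa only [Pi.add_apply, smul_eq_mul, sq_abs, add_assoc, hsplit] using h
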